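/- Let ψ be a PTL formula over Σ with operator depth at most K, where K > 0. Then for all strings u, v, s, t ∈ Σ*, the string u(st)^K s v satisfies ψ if and only if the string u(st)^K v satisfies ψ. -/

import Mathlib

/-- PTL formulas over alphabet `α`: atoms, conjunction, negation, and the past operator. -/
inductive PTL (α : Type*) : Type _
  | atom : α → PTL α
  | conj : PTL α → PTL α → PTL α
  | neg : PTL α → PTL α
  | past : PTL α → PTL α

/-- Satisfaction of a PTL formula in string `w` at (1-based) position `n ∈ {1,…,N+1}`. -/
def PTL.Sat {α : Type*} (w : List α) : PTL α → ℕ → Prop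
  | .atom a, n => 1 ≤ n ∧ w[n - 1]? = some a
  | .conj ψ₁ ψ₂, n => PTL.Sat w ψ₁ n ∧ PTL.Sat w ψ₂ n
  | .neg ψ, n => ¬ PTL.Sat w ψ n
  | .past ψ, n => ∃ m, 1 ≤ m ∧ m < n ∧ PTL.Sat w ψ m

/-- A string `w` of length `N` satisfies `ψ` iff `w, N+1 ⊨ ψ`. -/
def PTL.Models {α : Type*} (w : List α) (ψ : PTL α) : Prop :=
  PTL.Sat w ψ (w.length + 1)

/-- A language is PTL-definable if it is the set of strings satisfying some PTL formula. -/
def PTLDefinable {α : Type*} (L : Set (List α)) : Prop :=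
  ∃ ψ : PTL α, ∀ w : List α, w ∈ L ↔ PTL.Models w ψ

/-- Operator depth: maximal nesting of the past operator. -/
def PTL.depth {α : Type*} : PTL α → ℕ
  | .atom _ => 0
  | .conj ψ₁ ψ₂ => max (PTL.depth ψ₁) (PTL.depth ψ₂)
  | .neg ψ => PTL.depth ψ
  | .past ψ => PTL.depth ψ + 1

/-- `listPow w k` is the `k`-fold concatenation `w^k`. -/
def listPow {α : Type*} (w : List α) : ℕ → List α
  | 0 => []
  | k + 1 => w ++ listPow w k


/-!
Call two positions `d`-equivalent when they satisfy the same formulas of depth at most `d`.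
Since `P` ranges over all earlier positions, two positions are `(d + 1)`-equivalent as soon as
they carry the same letter and every earlier position of either one has a `d`-equivalent earlier
position of the other.

Write `p = st`. In a run of copies of `p`, the same offset in copies `c₁, c₂ ≥ d` gives
`d`-equivalent positions. The inserted `s` in `u p^K s v` is the start of copy `K` of `u p^(K+1)`,
so each of its letters is `(K - 1)`-equivalent to the same letter of copy `K - 1`, a position of
the common prefix `u p^K`. Deleting a factor all of whose positions are `d`-equivalent to positions
of the prefix before it preserves `(d + 1)`-equivalence of every later position, in particular of
the two end positions.
-/

theorem length_listPow {α : Type*} (p : List α) (n : ℕ) :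
    (listPow p n).length = n * p.length := by
  induction n with
  | zero => simp [listPow]
  | succ n ih => simp only [listPow, List.length_append, ih]; ring

theorem listPow_succ' {α : Type*} (p : List α) (n : ℕ) :
    listPow p (n + 1) = listPow p n ++ p := by
  induction n with
  | zero => simp [listPow]
  | succ n ih =>
    show p ++ listPow p (n + 1) = (p ++ listPow p n) ++ p
    rw [ih, List.append_assoc]

theorem getElem?_listPow {α : Type*} (p : List α) {n c j : ℕ} (hc : c < n)
    (hj : j < p.length) : (listPow p n)[c * p.length + j]? = p[j]? := by
  induction n generalizing c with
  | zero => omega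
  | succ n ih =>
    rw [listPow]
    cases c with
    | zero => simpa using List.getElem?_append_left hj
    | succ c =>
      rw [List.getElem?_append_right (by rw [Nat.succ_mul]; omega),
        ← ih (Nat.lt_of_succ_lt_succ hc)]
      congr 1
      rw [Nat.succ_mul]; omega

namespace PTL

variable {α : Type*}

def PosEquiv (w₁ w₂ : List α) (d n₁ n₂ : ℕ) : Prop :=
  ∀ ψ : PTL α, ψ.depth ≤ d → (Sat w₁ ψ n₁ ↔ Sat w₂ ψ n₂)

theorem sat_iff_of_take_eq {w₁ w₂ : List α} (ψ : PTL α) {n : ℕ}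
    (h : w₁.take n = w₂.take n) : Sat w₁ ψ n ↔ Sat w₂ ψ n := by
  induction ψ generalizing n with
  | atom a =>
    have hget := congrArg (·[n - 1]?) h
    simp only [List.getElem?_take] at hget
    by_cases hn : 1 ≤ n
    · simp only [Sat, hn, true_and, if_pos (show n - 1 < n by omega)] at hget ⊢
      rw [hget]
    · simp [Sat, hn]
  | conj ψ₁ ψ₂ ih₁ ih₂ => exact and_congr (ih₁ h) (ih₂ h)
  | neg ψ ih => exact not_congr (ih h)
  | past ψ ih =>
    have htake : ∀ m < n, w₁.take m = w₂.take m := fun m hm => by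
      have := congrArg (List.take m) h
      rwa [List.take_take, List.take_take, min_eq_left hm.le] at this
    simp only [Sat]
    exact exists_congr fun m => and_congr_right fun _ =>
      and_congr_right fun hm => ih (htake m hm)

namespace PosEquiv

variable {w₁ w₂ w₃ : List α} {d n₁ n₂ n₃ : ℕ}

theorem refl (w : List α) (d n : ℕ) : PosEquiv w w d n n := fun _ _ => Iff.rfl

theorem symm (h : PosEquiv w₁ w₂ d n₁ n₂) : PosEquiv w₂ w₁ d n₂ n₁ :=
  fun ψ hψ => (h ψ hψ).symm

theorem trans (h : PosEquiv w₁ w₂ d n₁ n₂) (h' : PosEquiv w₂ w₃ d n₂ n₃) :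
    PosEquiv w₁ w₃ d n₁ n₃ :=
  fun ψ hψ => (h ψ hψ).trans (h' ψ hψ)

theorem mono {d' : ℕ} (h : PosEquiv w₁ w₂ d n₁ n₂) (hd : d' ≤ d) : PosEquiv w₁ w₂ d' n₁ n₂ :=
  fun ψ hψ => h ψ (hψ.trans hd)

theorem of_take_eq {n : ℕ} (h : w₁.take n = w₂.take n) (d : ℕ) : PosEquiv w₁ w₂ d n n :=
  fun ψ _ => sat_iff_of_take_eq ψ h

theorem append_of_le_length {x y z : List α} {n : ℕ} (hn : n ≤ x.length) (d : ℕ) :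
    PosEquiv (x ++ y) (x ++ z) d n n :=
  of_take_eq (by rw [List.take_append_of_le_length hn, List.take_append_of_le_length hn]) d

theorem zero (h₁ : 1 ≤ n₁) (h₂ : 1 ≤ n₂) (h : w₁[n₁ - 1]? = w₂[n₂ - 1]?) :
    PosEquiv w₁ w₂ 0 n₁ n₂ := by
  intro ψ hψ
  induction ψ with
  | atom a => simp only [Sat, h₁, h₂, true_and, h]
  | conj ψ₁ ψ₂ ih₁ ih₂ =>
    obtain ⟨hψ₁, hψ₂⟩ := max_le_iff.mp hψ
    exact and_congr (ih₁ hψ₁) (ih₂ hψ₂)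
  | neg ψ ih => exact not_congr (ih hψ)
  | past ψ => exact absurd hψ (Nat.not_succ_le_zero _)

theorem succ (h₀ : PosEquiv w₁ w₂ 0 n₁ n₂)
    (forth : ∀ m₁, 1 ≤ m₁ → m₁ < n₁ → ∃ m₂, 1 ≤ m₂ ∧ m₂ < n₂ ∧ PosEquiv w₁ w₂ d m₁ m₂)
    (back : ∀ m₂, 1 ≤ m₂ → m₂ < n₂ → ∃ m₁, 1 ≤ m₁ ∧ m₁ < n₁ ∧ PosEquiv w₁ w₂ d m₁ m₂) :
    PosEquiv w₁ w₂ (d + 1) n₁ n₂ := by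
  intro ψ hψ
  induction ψ with
  | atom a => exact h₀ (.atom a) le_rfl
  | conj ψ₁ ψ₂ ih₁ ih₂ =>
    obtain ⟨hψ₁, hψ₂⟩ := max_le_iff.mp hψ
    exact and_congr (ih₁ hψ₁) (ih₂ hψ₂)
  | neg ψ ih => exact not_congr (ih hψ)
  | past ψ =>
    have hψ' : ψ.depth ≤ d := Nat.le_of_succ_le_succ hψ
    constructor
    · rintro ⟨m₁, hm₁, hlt, hsat⟩
      obtain ⟨m₂, hm₂, hlt₂, he⟩ := forth m₁ hm₁ hlt
      exact ⟨m₂, hm₂, hlt₂, (he ψ hψ').mp hsat⟩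
    · rintro ⟨m₂, hm₂, hlt, hsat⟩
      obtain ⟨m₁, hm₁, hlt₁, he⟩ := back m₂ hm₂ hlt
      exact ⟨m₁, hm₁, hlt₁, (he ψ hψ').mpr hsat⟩

theorem of_periodic {w p : List α} {a n : ℕ}
    (hper : ∀ c < n, ∀ j < p.length, w[a + c * p.length + j]? = p[j]?) {e : ℕ} :
    ∀ {c₁ c₂ j : ℕ}, j < p.length → e ≤ c₁ → e ≤ c₂ → c₁ < n → c₂ < n →
      PosEquiv w w e (a + c₁ * p.length + j + 1) (a + c₂ * p.length + j + 1) := by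
  induction e with
  | zero =>
    intro c₁ c₂ j hj _ _ hc₁ hc₂
    refine zero (by omega) (by omega) ?_
    simp only [Nat.add_sub_cancel, hper _ hc₁ _ hj, hper _ hc₂ _ hj]
  | succ e ih =>
    intro c₁ c₂ j hj h₁ h₂ hc₁ hc₂
    wlog hc : c₁ ≤ c₂ generalizing c₁ c₂
    · exact (this h₂ h₁ hc₂ hc₁ (by omega)).symm
    set L := p.length
    have hmono : c₁ * L ≤ c₂ * L := Nat.mul_le_mul_right _ hc
    have hlow : (e + 1) * L ≤ c₁ * L := Nat.mul_le_mul_right _ h₁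
    rw [add_one_mul] at hlow
    refine succ ((ih hj (by omega) (by omega) hc₁ hc₂).mono (Nat.zero_le e))
      (fun m₁ hm₁ hlt => ⟨m₁, hm₁, by omega, refl w e m₁⟩) fun m₂ hm₂ hlt => ?_
    by_cases hm : m₂ < a + c₁ * L + j + 1
    · exact ⟨m₂, hm₂, hm, refl w e m₂⟩
    -- `m₂` lies in some copy `c > e`; move it down to copy `e`, which precedes copy `c₁`.
    obtain ⟨c, i, hi, rfl⟩ : ∃ c i, i < L ∧ m₂ = a + c * L + i + 1 :=
      ⟨(m₂ - 1 - a) / L, (m₂ - 1 - a) % L, Nat.mod_lt _ (by omega),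
        by have := Nat.div_add_mod' (m₂ - 1 - a) L; omega⟩
    have hc_gt : e < c := Nat.lt_of_mul_lt_mul_right (a := L) (by omega)
    have hc_lt : c < c₂ + 1 := Nat.lt_of_mul_lt_mul_right (a := L) (by rw [add_one_mul]; omega)
    exact ⟨a + e * L + i + 1, by omega, by omega, ih hi le_rfl hc_gt.le (by omega) (by omega)⟩

theorem delete_infix {x s v : List α} {d : ℕ}
    (hs : ∀ j < s.length, ∃ m, 1 ≤ m ∧ m ≤ x.length ∧
      PosEquiv (x ++ s ++ v) (x ++ v) d (x.length + j + 1) m) (i : ℕ) :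
    PosEquiv (x ++ s ++ v) (x ++ v) (d + 1) (x.length + s.length + i + 1) (x.length + i + 1) := by
  suffices h : ∀ e ≤ d + 1, ∀ i,
      PosEquiv (x ++ s ++ v) (x ++ v) e (x.length + s.length + i + 1) (x.length + i + 1) from
    h _ le_rfl i
  have hprefix : ∀ e m, m ≤ x.length → PosEquiv (x ++ s ++ v) (x ++ v) e m m := fun e m hm => by
    rw [List.append_assoc]; exact append_of_le_length hm e
  intro e
  induction e with
  | zero =>
    intro _ i
    refine zero (by omega) (by omega) ?_
    rw [List.getElem?_append_right (by simp only [List.length_append]; omega),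
      List.getElem?_append_right (by omega)]
    simp only [List.length_append]
    congr 1
    omega
  | succ e ih =>
    intro he i
    refine succ ((ih (by omega) i).mono (Nat.zero_le e)) (fun m₁ hm₁ hlt => ?_) fun m₂ hm₂ hlt => ?_
    · by_cases hx : m₁ ≤ x.length
      · exact ⟨m₁, hm₁, by omega, hprefix e m₁ hx⟩
      by_cases hxs : m₁ ≤ x.length + s.length
      · obtain ⟨m, hm, hmx, hequiv⟩ := hs (m₁ - x.length - 1) (by omega)
        refine ⟨m, hm, by omega, ?_⟩
        rw [show m₁ = x.length + (m₁ - x.length - 1) + 1 by omega]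
        exact hequiv.mono (by omega)
      · obtain ⟨i', rfl⟩ : ∃ i', m₁ = x.length + s.length + i' + 1 :=
          ⟨m₁ - x.length - s.length - 1, by omega⟩
        exact ⟨x.length + i' + 1, by omega, by omega, ih (by omega) i'⟩
    · by_cases hx : m₂ ≤ x.length
      · exact ⟨m₂, hm₂, by omega, hprefix e m₂ hx⟩
      · obtain ⟨i', rfl⟩ : ∃ i', m₂ = x.length + i' + 1 := ⟨m₂ - x.length - 1, by omega⟩
        exact ⟨x.length + s.length + i' + 1, by omega, by omega, ih (by omega) i'⟩

theorem exists_of_inserted_prefix (u s t v : List α) (k : ℕ) :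
    ∀ j < s.length, ∃ m, 1 ≤ m ∧ m ≤ (u ++ listPow (s ++ t) (k + 1)).length ∧
      PosEquiv (u ++ listPow (s ++ t) (k + 1) ++ s ++ v) (u ++ listPow (s ++ t) (k + 1) ++ v) k
        ((u ++ listPow (s ++ t) (k + 1)).length + j + 1) m := by
  intro j hj
  set p := s ++ t
  set x := u ++ listPow p (k + 1)
  have hsp : s.length ≤ p.length := by simp [p]
  have hx : x.length = u.length + (k + 1) * p.length := by simp [x, length_listPow]
  have hkp : (k + 1) * p.length = k * p.length + p.length := add_one_mul k p.length
  have hW : u ++ listPow p (k + 2) = x ++ s ++ t := by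
    rw [listPow_succ']; simp only [x, p, List.append_assoc]
  have hper : ∀ c < k + 2, ∀ i < p.length,
      (u ++ listPow p (k + 2))[u.length + c * p.length + i]? = p[i]? := fun c hc i hi => by
    rw [add_assoc, List.getElem?_append_right (by omega), Nat.add_sub_cancel_left,
      getElem?_listPow p hc hi]
  have hext : PosEquiv (x ++ s ++ v) (u ++ listPow p (k + 2)) k
      (x.length + j + 1) (x.length + j + 1) := by
    rw [hW]; exact append_of_le_length (x := x ++ s) (by simp only [List.length_append]; omega) k
  have hshift : PosEquiv (u ++ listPow p (k + 2)) (u ++ listPow p (k + 2)) k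
      (x.length + j + 1) (u.length + k * p.length + j + 1) := by
    rw [hx]; exact of_periodic hper (by omega) k.le_succ le_rfl (by omega) (by omega)
  have hback : PosEquiv (u ++ listPow p (k + 2)) (x ++ v) k
      (u.length + k * p.length + j + 1) (u.length + k * p.length + j + 1) := by
    rw [hW, List.append_assoc]; exact append_of_le_length (x := x) (by omega) k
  exact ⟨u.length + k * p.length + j + 1, by omega, by omega, hext.trans (hshift.trans hback)⟩

end PosEquiv

end PTL

theorem ptl_pumping_general {α : Type*} (ψ : PTL α) (K : ℕ) (hK : 0 < K)
    (hd : PTL.depth ψ ≤ K) (u v s t : List α) :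
    (PTL.Models (u ++ listPow (s ++ t) K ++ s ++ v) ψ ↔
      PTL.Models (u ++ listPow (s ++ t) K ++ v) ψ) := by
  obtain ⟨k, rfl⟩ : ∃ k, K = k + 1 := ⟨K - 1, by omega⟩
  have hend := PTL.PosEquiv.delete_infix (PTL.PosEquiv.exists_of_inserted_prefix u s t v k)
    v.length ψ hd
  simpa only [PTL.Models, List.length_append] using hend

/-- If `ψ` has operator depth at most `K > 0`, then for all strings
`u, v, s, t`, the string `u (st)^K s v` satisfies `ψ` iff `u (st)^K v` does. -/
theorem ptl_pumping {α : Type*} [Fintype α] (ψ : PTL α) (K : ℕ) (hK : 0 < K)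
    (hd : PTL.depth ψ ≤ K) (u v s t : List α) :
    (PTL.Models (u ++ listPow (s ++ t) K ++ s ++ v) ψ ↔
      PTL.Models (u ++ listPow (s ++ t) K ++ v) ψ) :=
  ptl_pumping_general ψ K hK hd u v s t
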